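/- Let u be C² on a domain D ⊆ ℝ^m (m ≥ 2) and λ ≠ 0 a real number. Then u satisfies Δu + λ²u = 0 on D if and only if for every x ∈ D, lim_{r→0⁺} (M•(u, B_r(x)) − u(x))/r² = −λ² u(x)/(2(m+2)). -/

import Mathlib

/-!
Taylor-expand `u` to second order at `x`. Over a ball centred at `x` the linear term averages to
zero, the mixed products `zᵢ zⱼ` (`i ≠ j`) average to zero by reflecting one coordinate, and each
`zᵢ²` averages to `r² / (n + 2)` because `‖z‖²` averages to `n r² / (n + 2)`; so the quadratic
term contributes exactly `r² Δu(x) / (2 (n + 2))`, while the remainder is `o(r²)` uniformly on the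
ball. Hence `(M•(u, B_r(x)) - u(x)) / r² → Δu(x) / (2 (n + 2))`, and by uniqueness of limits this
limit equals `-λ² u(x) / (2 (n + 2))` exactly when `Δu(x) + λ² u(x) = 0`.
-/

open MeasureTheory Metric Filter Real
open scoped Topology ENNReal

noncomputable def ballMean (m : ℕ) (u : EuclideanSpace ℝ (Fin m) → ℝ)
    (x : EuclideanSpace ℝ (Fin m)) (r : ℝ) : ℝ :=
  ⨍ y in ball x r, u y

noncomputable def lap (m : ℕ) (u : EuclideanSpace ℝ (Fin m) → ℝ)
    (x : EuclideanSpace ℝ (Fin m)) : ℝ :=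
  ∑ i : Fin m, fderiv ℝ (fun y => fderiv ℝ u y (EuclideanSpace.single i 1)) x
    (EuclideanSpace.single i 1)

open Module

section Average

variable {α F : Type*} [MeasurableSpace α] [NormedAddCommGroup F] [NormedSpace ℝ F]
  {μ : Measure α} {s : Set α}

theorem setAverage_add {f g : α → F} (hf : IntegrableOn f s μ) (hg : IntegrableOn g s μ) :
    ⨍ x in s, (f x + g x) ∂μ = ⨍ x in s, f x ∂μ + ⨍ x in s, g x ∂μ := by
  simp only [setAverage_eq, integral_add hf hg, smul_add]

theorem norm_setAverage_le_of_norm_le {f : α → F} {C : ℝ} (hC₀ : 0 ≤ C)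
    (hC : ∀ x ∈ s, ‖f x‖ ≤ C) : ‖⨍ x in s, f x ∂μ‖ ≤ C := by
  rw [setAverage_eq, norm_smul, norm_inv, Real.norm_of_nonneg measureReal_nonneg]
  rcases measureReal_nonneg.eq_or_lt with h0 | hpos
  · rw [← h0, inv_zero, zero_mul]
    exact hC₀
  rw [inv_mul_le_iff₀ hpos, mul_comm]
  exact norm_setIntegral_le_of_norm_le_const (ENNReal.toReal_pos_iff.mp hpos).2 hC

end Average

theorem ContinuousOn.integrableOn_ball {X F : Type*} [MetricSpace X] [ProperSpace X]
    [MeasurableSpace X] [OpensMeasurableSpace X] [NormedAddCommGroup F] {μ : Measure X}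
    [IsFiniteMeasureOnCompacts μ] {f : X → F} {c : X} {r : ℝ}
    (hf : ContinuousOn f (closedBall c r)) :
    IntegrableOn f (ball c r) μ :=
  (hf.integrableOn_compact (isCompact_closedBall c r)).mono_set ball_subset_closedBall

theorem isLittleO_setAverage_ball_zero {E F : Type*} [NormedAddCommGroup E] [MeasurableSpace E]
    [NormedAddCommGroup F] [NormedSpace ℝ F] {μ : Measure E} {f : E → F}
    (hf : f =o[𝓝 0] fun h ↦ ‖h‖ ^ 2) :
    (fun r ↦ ⨍ z in ball (0 : E) r, f z ∂μ) =o[𝓝[>] 0] fun r ↦ r ^ 2 := by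
  refine Asymptotics.isLittleO_iff.2 fun ε hε ↦ ?_
  obtain ⟨δ, hδ, hball⟩ := Metric.eventually_nhds_iff_ball.1 (hf.def hε)
  filter_upwards [Ioo_mem_nhdsGT hδ] with r hr
  rw [Real.norm_of_nonneg (sq_nonneg r)]
  refine norm_setAverage_le_of_norm_le (by positivity) fun z hz ↦ ?_
  have hzr : ‖z‖ < r := mem_ball_zero_iff.1 hz
  calc ‖f z‖ ≤ ε * ‖‖z‖ ^ 2‖ := hball z (ball_subset_ball hr.2.le hz)
    _ ≤ ε * r ^ 2 := by
      rw [norm_pow, norm_norm]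
      gcongr

section HaarBall

variable {E F : Type*} [NormedAddCommGroup E] [MeasurableSpace E] [BorelSpace E]
  [NormedAddCommGroup F] [NormedSpace ℝ F] (μ : Measure E) [μ.IsAddHaarMeasure]

theorem setAverage_ball_eq_setAverage_ball_zero (f : E → F) (x : E) (r : ℝ) :
    ⨍ y in ball x r, f y ∂μ = ⨍ z in ball 0 r, f (x + z) ∂μ := by
  have hpre : (x + ·) ⁻¹' ball x r = ball (0 : E) r := by simp [preimage_add_ball]
  rw [setAverage_eq, setAverage_eq, Measure.addHaar_real_ball_center, ← hpre,
    (measurePreserving_add_left μ x).setIntegral_preimage_emb (measurableEmbedding_addLeft x)]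

variable [NormedSpace ℝ E] [FiniteDimensional ℝ E]

theorem measureReal_ball_of_pos (x : E) {r : ℝ} (hr : 0 < r) :
    μ.real (ball x r) = r ^ finrank ℝ E * μ.real (ball 0 1) := by
  rw [measureReal_def, Measure.addHaar_ball_of_pos μ x hr, ENNReal.toReal_mul,
    ENNReal.toReal_ofReal (by positivity), measureReal_def]

theorem integral_ball_zero_norm_sq [Nontrivial E] {r : ℝ} (hr : 0 < r) :
    ∫ z in ball (0 : E) r, ‖z‖ ^ 2 ∂μ
      = finrank ℝ E * μ.real (ball 0 1) * (r ^ (finrank ℝ E + 2) / (finrank ℝ E + 2)) := by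
  set n := finrank ℝ E
  have hn : 0 < n := finrank_pos
  have hradial :
      (ball (0 : E) r).indicator (‖·‖ ^ 2) = fun z ↦ (Set.Iio r).indicator (· ^ 2) ‖z‖ := by
    ext z
    by_cases hz : ‖z‖ < r <;> simp [Set.indicator, hz]
  have hpow : ∀ y : ℝ, y ^ (n - 1) • (Set.Iio r).indicator (· ^ 2) y
      = (Set.Iio r).indicator (· ^ (n + 1)) y := by
    intro y
    by_cases hy : y < r
    · simp only [Set.indicator, Set.mem_Iio, hy, if_true, smul_eq_mul, ← pow_add]
      congr 1
      omega
    · simp [Set.indicator, hy]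
  have hIoo : ∫ y in Set.Ioo (0 : ℝ) r, y ^ (n + 1) = r ^ (n + 2) / (n + 2) := by
    rw [← integral_Ioc_eq_integral_Ioo, ← intervalIntegral.integral_of_le hr.le, integral_pow]
    push_cast
    ring
  rw [← integral_indicator measurableSet_ball, hradial, integral_fun_norm_addHaar,
    funext hpow, setIntegral_indicator measurableSet_Iio, Set.Ioi_inter_Iio, hIoo,
    nsmul_eq_mul, smul_eq_mul, mul_assoc]

theorem setAverage_ball_zero_norm_sq [Nontrivial E] {r : ℝ} (hr : 0 < r) :
    ⨍ z in ball (0 : E) r, ‖z‖ ^ 2 ∂μ = finrank ℝ E / (finrank ℝ E + 2) * r ^ 2 := by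
  have hB : 0 < μ.real (ball (0 : E) 1) :=
    ENNReal.toReal_pos (measure_ball_pos μ _ one_pos).ne' measure_ball_lt_top.ne
  rw [setAverage_eq, integral_ball_zero_norm_sq μ hr, measureReal_ball_of_pos μ 0 hr, smul_eq_mul,
    pow_add]
  field_simp

end HaarBall

section InnerProduct

variable {E E' F : Type*} [NormedAddCommGroup E] [InnerProductSpace ℝ E] [FiniteDimensional ℝ E]
  [MeasurableSpace E] [BorelSpace E] [NormedAddCommGroup E'] [InnerProductSpace ℝ E']
  [FiniteDimensional ℝ E'] [MeasurableSpace E'] [BorelSpace E']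
  [NormedAddCommGroup F] [NormedSpace ℝ F]

theorem LinearIsometryEquiv.setIntegral_ball_zero_comp (e : E ≃ₗᵢ[ℝ] E') (f : E' → F) (r : ℝ) :
    ∫ z in ball (0 : E) r, f (e z) = ∫ z in ball (0 : E') r, f z := by
  have hpre : e ⁻¹' ball 0 r = ball 0 r := by ext z; simp
  rw [← hpre, e.measurePreserving.setIntegral_preimage_emb e.toHomeomorph.measurableEmbedding]

theorem integral_ball_zero_continuousLinearMap (L : E →L[ℝ] F) (r : ℝ) :
    ∫ z in ball (0 : E) r, L z = 0 := by
  have h := (LinearIsometryEquiv.neg ℝ (E := E)).setIntegral_ball_zero_comp L r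
  simp only [LinearIsometryEquiv.coe_neg, map_neg, integral_neg] at h
  rw [neg_eq_iff_add_eq_zero, ← two_smul ℝ, smul_eq_zero] at h
  exact h.resolve_left two_ne_zero

end InnerProduct

section Coordinates

variable {ι : Type*} [Fintype ι]

theorem integral_ball_zero_coord_mul_coord {i j : ι} (hij : i ≠ j) (r : ℝ) :
    ∫ z in ball (0 : EuclideanSpace ℝ ι) r, z i * z j = 0 := by
  classical
  let e : EuclideanSpace ℝ ι ≃ₗᵢ[ℝ] EuclideanSpace ℝ ι := LinearIsometryEquiv.piLpCongrRight 2
    fun k ↦ if k = i then LinearIsometryEquiv.neg ℝ else LinearIsometryEquiv.refl ℝ ℝ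
  have h := e.setIntegral_ball_zero_comp (fun z ↦ z i * z j) r
  simp [e, hij.symm, integral_neg] at h
  exact self_eq_neg.mp h.symm

theorem integral_ball_zero_coord_sq_eq (r : ℝ) (i j : ι) :
    ∫ z in ball (0 : EuclideanSpace ℝ ι) r, z i ^ 2
      = ∫ z in ball (0 : EuclideanSpace ℝ ι) r, z j ^ 2 := by
  classical
  rw [← (LinearIsometryEquiv.piLpCongrLeft 2 ℝ ℝ (Equiv.swap i j)).setIntegral_ball_zero_comp]
  simp

theorem integral_ball_zero_coord_sq (r : ℝ) (i : ι) :
    ∫ z in ball (0 : EuclideanSpace ℝ ι) r, z i ^ 2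
      = (∫ z in ball (0 : EuclideanSpace ℝ ι) r, ‖z‖ ^ 2) / Fintype.card ι := by
  have hsum : ∫ z in ball (0 : EuclideanSpace ℝ ι) r, ‖z‖ ^ 2
      = ∑ j : ι, ∫ z in ball (0 : EuclideanSpace ℝ ι) r, z j ^ 2 := by
    simp_rw [EuclideanSpace.norm_sq_eq, Real.norm_eq_abs, sq_abs]
    exact integral_finsetSum _ fun j _ ↦
      ((EuclideanSpace.proj j).continuous.pow 2).continuousOn.integrableOn_ball
  have : Nonempty ι := ⟨i⟩
  rw [hsum, Finset.sum_congr rfl fun j _ ↦ integral_ball_zero_coord_sq_eq r j i]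
  simp [Fintype.card_ne_zero]

end Coordinates

section Bilinear

variable {ι E : Type*} [Fintype ι] [NormedAddCommGroup E] [InnerProductSpace ℝ E]
  [FiniteDimensional ℝ E] [MeasurableSpace E] [BorelSpace E]

theorem integral_ball_zero_apply_self (b : OrthonormalBasis ι ℝ E) (Q : E →L[ℝ] E →L[ℝ] ℝ)
    (r : ℝ) : ∫ z in ball (0 : E) r, Q z z
      = (∫ z in ball (0 : E) r, ‖z‖ ^ 2) / Fintype.card ι * ∑ i, Q (b i) (b i) := by
  classical
  have hexp : ∀ w : EuclideanSpace ℝ ι,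
      Q (b.repr.symm w) (b.repr.symm w) = ∑ i, ∑ j, Q (b i) (b j) * (w i * w j) := by
    intro w
    simp only [← b.sum_repr_symm, map_sum, map_smul, sum_apply, smul_apply, smul_eq_mul,
      Finset.mul_sum]
    rw [Finset.sum_comm]
    exact Finset.sum_congr rfl fun i _ ↦ Finset.sum_congr rfl fun j _ ↦ by ring
  have hint : ∀ i j, IntegrableOn (fun w : EuclideanSpace ℝ ι ↦ w i * w j) (ball 0 r) :=
    fun i j ↦ ((EuclideanSpace.proj i).continuous.mul
      (EuclideanSpace.proj j).continuous).continuousOn.integrableOn_ball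
  have hrow : ∀ i, ∫ w in ball (0 : EuclideanSpace ℝ ι) r, ∑ j, Q (b i) (b j) * (w i * w j)
      = Q (b i) (b i) * ∫ w in ball (0 : EuclideanSpace ℝ ι) r, w i ^ 2 := by
    intro i
    rw [integral_finsetSum _ fun j _ ↦ (hint i j).const_mul _, Finset.sum_eq_single i
      (fun j _ hji ↦ by rw [integral_const_mul, integral_ball_zero_coord_mul_coord (Ne.symm hji),
        mul_zero]) (by simp), integral_const_mul]
    simp only [sq]
  rw [← b.repr.symm.setIntegral_ball_zero_comp, ← b.repr.symm.setIntegral_ball_zero_comp]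
  simp only [hexp, LinearIsometryEquiv.norm_map]
  rw [integral_finsetSum _ fun i _ ↦ integrable_finsetSum _ fun j _ ↦ (hint i j).const_mul _]
  simp only [hrow, integral_ball_zero_coord_sq, Finset.mul_sum]
  exact Finset.sum_congr rfl fun i _ ↦ mul_comm _ _

end Bilinear

section TaylorPolynomial

variable {ι E : Type*} [Fintype ι] [NormedAddCommGroup E] [InnerProductSpace ℝ E]
  [FiniteDimensional ℝ E] [MeasurableSpace E] [BorelSpace E] [Nontrivial E]

theorem setAverage_ball_zero_apply_self (b : OrthonormalBasis ι ℝ E) (Q : E →L[ℝ] E →L[ℝ] ℝ)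
    {r : ℝ} (hr : 0 < r) :
    ⨍ z in ball (0 : E) r, Q z z = r ^ 2 / (finrank ℝ E + 2) * ∑ i, Q (b i) (b i) := by
  have hn : (finrank ℝ E : ℝ) ≠ 0 := Nat.cast_ne_zero.2 finrank_pos.ne'
  have hnorm := setAverage_ball_zero_norm_sq (volume : Measure E) hr
  rw [setAverage_eq, smul_eq_mul] at hnorm
  rw [setAverage_eq, integral_ball_zero_apply_self b, smul_eq_mul, ← mul_assoc, mul_div_assoc',
    hnorm, ← finrank_eq_card_basis b.toBasis]
  field_simp

theorem setAverage_ball_zero_taylor_two (b : OrthonormalBasis ι ℝ E) (c : ℝ) (L : E →L[ℝ] ℝ)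
    (Q : E →L[ℝ] E →L[ℝ] ℝ) {r : ℝ} (hr : 0 < r) :
    ⨍ z in ball (0 : E) r, (c + L z + 2⁻¹ * Q z z)
      = c + r ^ 2 / (2 * (finrank ℝ E + 2)) * ∑ i, Q (b i) (b i) := by
  have hint {f : E → ℝ} (hf : Continuous f) : IntegrableOn f (ball 0 r) :=
    hf.continuousOn.integrableOn_ball
  have hconst : ⨍ _ in ball (0 : E) r, c = c :=
    setAverage_const (measure_ball_pos volume 0 hr).ne' measure_ball_lt_top.ne c
  have hlin : ⨍ z in ball (0 : E) r, L z = 0 := by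
    rw [setAverage_eq, integral_ball_zero_continuousLinearMap, smul_zero]
  have hquad : ⨍ z in ball (0 : E) r, 2⁻¹ * Q z z = 2⁻¹ * ⨍ z in ball (0 : E) r, Q z z := by
    simp only [setAverage_eq, integral_const_mul, smul_eq_mul, mul_left_comm]
  rw [setAverage_add (hint (by fun_prop)) (hint (by fun_prop)),
    setAverage_add (hint continuous_const) (hint L.continuous), hconst, hlin, hquad,
    setAverage_ball_zero_apply_self b Q hr]
  field_simp
  ring

end TaylorPolynomial

section Taylor

variable {E F : Type*} [NormedAddCommGroup E] [NormedSpace ℝ E] [NormedAddCommGroup F]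
  [NormedSpace ℝ F]

theorem ContinuousLinearMap.hasFDerivAt_half_apply_self (Q : E →L[ℝ] E →L[ℝ] F)
    (hQ : ∀ v w, Q v w = Q w v) (h : E) :
    HasFDerivAt (fun k ↦ (2 : ℝ)⁻¹ • Q k k) (Q h) h := by
  refine ((Q.hasFDerivAt_of_bilinear (hasFDerivAt_id h) (hasFDerivAt_id h)).const_smul
    (2 : ℝ)⁻¹).congr_fderiv ?_
  ext v
  simp [hQ v h, ← two_smul ℝ]

theorem ContDiffAt.isLittleO_sub_taylor_two {u : E → F} {x : E} (hu : ContDiffAt ℝ 2 u x) :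
    (fun h ↦ u (x + h) - u x - fderiv ℝ u x h - (2 : ℝ)⁻¹ • fderiv ℝ (fderiv ℝ u) x h h)
      =o[𝓝 0] fun h ↦ ‖h‖ ^ 2 := by
  set L := fderiv ℝ u x
  set Q := fderiv ℝ (fderiv ℝ u) x
  have hsymm : ∀ v w, Q v w = Q w v :=
    hu.isSymmSndFDerivAt (by simp [minSmoothness_of_isRCLikeNormedField])
  have hQ : HasFDerivAt (fderiv ℝ u) Q x :=
    ((hu.fderiv_right (m := 1) le_rfl).differentiableAt one_ne_zero).hasFDerivAt
  have hdiff : ∀ᶠ h in 𝓝 (0 : E), HasFDerivAt u (fderiv ℝ u (x + h)) (x + h) := by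
    have hx : Tendsto (x + ·) (𝓝 (0 : E)) (𝓝 x) := by
      simpa using (continuous_const_add x).tendsto (0 : E)
    filter_upwards [hx.eventually (hu.eventually (by simp))] with h hh
    exact (hh.differentiableAt (by simp)).hasFDerivAt
  refine Asymptotics.isLittleO_iff.2 fun ε hε ↦ ?_
  obtain ⟨δ, hδ, hball⟩ := Metric.eventually_nhds_iff_ball.1
    (hdiff.and ((hasFDerivAt_iff_isLittleO_nhds_zero.1 hQ).def hε))
  filter_upwards [ball_mem_nhds 0 hδ] with h hh
  set g : E → F := fun k ↦ u (x + k) - L k - (2 : ℝ)⁻¹ • Q k k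
  have hsub : closedBall 0 ‖h‖ ⊆ ball (0 : E) δ :=
    closedBall_subset_ball (by simpa using hh)
  have hg : ∀ k ∈ closedBall (0 : E) ‖h‖,
      HasFDerivWithinAt g (fderiv ℝ u (x + k) - L - Q k) (closedBall 0 ‖h‖) k := by
    intro k hk
    have hu' := (hasFDerivAt_comp_add_left x).2 (hball k (hsub hk)).1
    exact ((hu'.sub L.hasFDerivAt).sub (Q.hasFDerivAt_half_apply_self hsymm k)).hasFDerivWithinAt
  have hbound : ∀ k ∈ closedBall (0 : E) ‖h‖, ‖fderiv ℝ u (x + k) - L - Q k‖ ≤ ε * ‖h‖ := by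
    intro k hk
    calc ‖fderiv ℝ u (x + k) - L - Q k‖ ≤ ε * ‖k‖ := (hball k (hsub hk)).2
      _ ≤ ε * ‖h‖ := by gcongr; simpa using hk
  have hmvt := (convex_closedBall (0 : E) ‖h‖).norm_image_sub_le_of_norm_hasFDerivWithin_le hg
    hbound (mem_closedBall_self (norm_nonneg h)) (mem_closedBall_zero_iff.2 le_rfl)
  have hg0 : g 0 = u x := by simp [g]
  calc ‖u (x + h) - u x - L h - (2 : ℝ)⁻¹ • Q h h‖ = ‖g h - g 0‖ := by
        rw [hg0]; simp only [g]; congr 1; abel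
    _ ≤ ε * ‖h‖ * ‖h - 0‖ := hmvt
    _ = ε * ‖‖h‖ ^ 2‖ := by rw [sub_zero, norm_pow, norm_norm, sq, mul_assoc]

end Taylor

section MeanValue

open InnerProductSpace Laplacian

variable {E : Type*} [NormedAddCommGroup E] [InnerProductSpace ℝ E] [FiniteDimensional ℝ E]

theorem laplacian_eq_sum_fderiv_fderiv {ι : Type*} [Fintype ι] (u : E → ℝ) (x : E)
    (b : OrthonormalBasis ι ℝ E) :
    Δ u x = ∑ i, fderiv ℝ (fderiv ℝ u) x (b i) (b i) := by
  simp [laplacian_eq_iteratedFDeriv_orthonormalBasis u b, iteratedFDeriv_two_apply]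

variable [MeasurableSpace E] [BorelSpace E]

theorem ContDiffAt.tendsto_setAverage_ball_sub_div_sq [Nontrivial E] {u : E → ℝ} {x : E}
    (hu : ContDiffAt ℝ 2 u x) :
    Tendsto (fun r ↦ ((⨍ y in ball x r, u y) - u x) / r ^ 2) (𝓝[>] 0)
      (𝓝 (Δ u x / (2 * (finrank ℝ E + 2)))) := by
  set b := stdOrthonormalBasis ℝ E
  set L := fderiv ℝ u x
  set Q := fderiv ℝ (fderiv ℝ u) x
  set R := fun h ↦ u (x + h) - u x - L h - (2 : ℝ)⁻¹ • Q h h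
  have hQ : Continuous fun z ↦ Q z z := Q.continuous₂.comp (continuous_id.prodMk continuous_id)
  have hP : Continuous fun h ↦ u x + L h + 2⁻¹ * Q h h := by fun_prop
  have hR : Tendsto (fun r ↦ (⨍ z in ball 0 r, R z) / r ^ 2) (𝓝[>] 0) (𝓝 0) :=
    (isLittleO_setAverage_ball_zero hu.isLittleO_sub_taylor_two).tendsto_div_nhds_zero
  have hcont : ∀ᶠ r in 𝓝[>] (0 : ℝ), ContinuousOn (fun z ↦ u (x + z)) (closedBall 0 r) := by
    obtain ⟨δ, hδ, hball⟩ := Metric.eventually_nhds_iff_ball.1 (hu.eventually (by simp))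
    filter_upwards [Ioo_mem_nhdsGT hδ] with r hr z hz
    have hxz : x + z ∈ ball x δ := by
      simpa [dist_eq_norm] using (mem_closedBall_zero_iff.1 hz).trans_lt hr.2
    exact ((hball _ hxz).continuousAt.comp (continuous_const_add x).continuousAt).continuousWithinAt
  have hlim := (tendsto_const_nhds (x := Δ u x / (2 * (finrank ℝ E + 2)))).add hR
  rw [add_zero] at hlim
  refine hlim.congr' ?_
  filter_upwards [hcont, self_mem_nhdsWithin] with r hr (hr0 : 0 < r)
  have hsplit : ⨍ y in ball x r, u y
      = (⨍ z in ball 0 r, (u x + L z + 2⁻¹ * Q z z)) + ⨍ z in ball 0 r, R z := by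
    have hRint : IntegrableOn R (ball 0 r) := ContinuousOn.integrableOn_ball
      (((hr.sub continuousOn_const).sub L.continuous.continuousOn).sub
        (hQ.const_smul (2 : ℝ)⁻¹).continuousOn)
    rw [setAverage_ball_eq_setAverage_ball_zero, ← setAverage_add hP.continuousOn.integrableOn_ball
      hRint]
    congr 1
    ext z
    simp only [R, smul_eq_mul]
    ring
  rw [hsplit, setAverage_ball_zero_taylor_two b (u x) L Q hr0, laplacian_eq_sum_fderiv_fderiv u x b]
  field_simp
  ring

end MeanValue

theorem lap_eq_laplacian {m : ℕ} {u : EuclideanSpace ℝ (Fin m) → ℝ} {x : EuclideanSpace ℝ (Fin m)}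
    (hu : DifferentiableAt ℝ (fderiv ℝ u) x) : lap m u x = Laplacian.laplacian u x := by
  rw [laplacian_eq_sum_fderiv_fderiv u x (EuclideanSpace.basisFun (Fin m) ℝ), lap]
  refine Finset.sum_congr rfl fun i _ ↦ ?_
  rw [fderiv_clm_apply hu (differentiableAt_const _)]
  simp

theorem stmt4_general (m : ℕ) (hm : 2 ≤ m) (D : Set (EuclideanSpace ℝ (Fin m))) (hD : IsOpen D)
    (u : EuclideanSpace ℝ (Fin m) → ℝ) (hu : ContDiffOn ℝ 2 u D) (l : ℝ) :
    (∀ x ∈ D, lap m u x + l ^ 2 * u x = 0) ↔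
      ∀ x ∈ D, Tendsto (fun r => (ballMean m u x r - u x) / r ^ 2) (𝓝[>] 0)
        (𝓝 (-(l ^ 2 * u x) / (2 * (m + 2)))) := by
  have : Nonempty (Fin m) := ⟨⟨0, by omega⟩⟩
  have hlim : ∀ x ∈ D, Tendsto (fun r ↦ (ballMean m u x r - u x) / r ^ 2) (𝓝[>] 0)
      (𝓝 (lap m u x / (2 * (m + 2)))) := by
    intro x hx
    have hux := hu.contDiffAt (hD.mem_nhds hx)
    rw [lap_eq_laplacian ((hux.fderiv_right (m := 1) le_rfl).differentiableAt one_ne_zero)]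
    simpa [ballMean] using hux.tendsto_setAverage_ball_sub_div_sq
  have hne : (2 * ((m : ℝ) + 2)) ≠ 0 := by positivity
  refine forall₂_congr fun x hx ↦ ?_
  rw [← eq_neg_iff_add_eq_zero, ← div_left_inj' hne]
  exact ⟨fun h ↦ h ▸ hlim x hx, tendsto_nhds_unique (hlim x hx)⟩

theorem stmt4 (m : ℕ) (hm : 2 ≤ m) (D : Set (EuclideanSpace ℝ (Fin m))) (hD : IsOpen D)
    (u : EuclideanSpace ℝ (Fin m) → ℝ) (hu : ContDiffOn ℝ 2 u D) (hDc : IsConnected D) (l : ℝ) (hl : l ≠ 0) :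
    (∀ x ∈ D, lap m u x + l ^ 2 * u x = 0) ↔
      ∀ x ∈ D, Tendsto (fun r => (ballMean m u x r - u x) / r ^ 2) (𝓝[>] 0)
        (𝓝 (-(l ^ 2 * u x) / (2 * (m + 2)))) :=
  stmt4_general m hm D hD u hu l
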